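/- arXiv:math-ph/0612064 — 4 statements merged into one kernel-verified Lean document; each statement's English description precedes it below -/
import Mathlib

section
/- For any n×n matrices A = (a_{ij}) and B = (b_{ij}) over a commutative ring, ∑_{σ ∈ S_n} det( (a_{i,σ(j)} b_{j,σ(j)})_{1≤i,j≤n} ) = det(A) · det(B). -/
theorem sum_perm_det_eq_det_mul_det {R : Type*} [CommRing R] (n : ℕ)
    (A B : Matrix (Fin n) (Fin n) R) :
    ∑ σ : Equiv.Perm (Fin n),
      Matrix.det (Matrix.of fun i j => A i (σ j) * B j (σ j)) =
    A.det * B.det := by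
  have h : ∀ σ : Equiv.Perm (Fin n),
      Matrix.det (Matrix.of fun i j => A i (σ j) * B j (σ j)) =
      (Equiv.Perm.sign σ : R) * (∏ j, B j (σ j)) * A.det := by
    intro σ
    have h1 : Matrix.det (Matrix.of fun i j => (fun j => B j (σ j)) j *
        (A.submatrix id σ) i j) = (∏ j, B j (σ j)) * (A.submatrix id σ).det :=
      Matrix.det_mul_row _ _
    simp only [Matrix.submatrix, Matrix.of_apply, id] at h1
    rw [show (Matrix.of fun i j => A i (σ j) * B j (σ j)) =
        (Matrix.of fun i j => B j (σ j) * A i (σ j)) by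
          ext i j; simp only [Matrix.of_apply]; ring,
      h1,
      show Matrix.det (Matrix.of fun i j => A i (σ j)) = (A.submatrix id σ).det from rfl,
      Matrix.det_permute' σ A]
    ring
  rw [Finset.sum_congr rfl fun σ _ => h σ, ← Finset.sum_mul, mul_comm]
  congr 1
  rw [← Matrix.det_transpose B, Matrix.det_apply']
  simp [Matrix.transpose, zsmul_eq_mul]
end

section
/- (Andréief/Heine identity) Let f_1,...,f_n and g_1,...,g_n be integrable functions on a measure space (E, μ). Then (1/n!) ∫_{E^n} det(f_i(x_j))_{1≤i,j≤n} det(g_i(x_j))_{1≤i,j≤n} dμ(x_1)...dμ(x_n) = det( ∫_E f_i(x) g_j(x) dμ(x) )_{1≤i,j≤n}. -/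
/-!
Expanding both determinants, the integrand is a signed double sum over permutations `σ, τ` of
products `∏ j, f (σ j) (x j) * g (τ j) (x j)`, each of which integrates by Fubini to
`∏ j, G (σ j) (τ j)` for the Gram matrix `G i j = ∫ f i * g j`. For fixed `τ` the signed sum
over `σ` is the determinant of `G` with columns permuted by `τ`, which is `sign τ * det G`; the
extra factor `sign τ` cancels this sign, so each of the `n!` choices of `τ` contributes `det G`.
-/

open MeasureTheory Equiv Equiv.Perm Finset

namespace Matrix

variable {ι R : Type*} [Fintype ι] [DecidableEq ι] [CommRing R]

theorem det_mul_det_eq_sum_sum_perm (A B : Matrix ι ι R) :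
    A.det * B.det = ∑ σ : Perm ι, ∑ τ : Perm ι,
      ((sign σ : ℤ) * (sign τ : ℤ) : R) * ∏ j, A (σ j) j * B (τ j) j := by
  rw [det_apply', det_apply', sum_mul_sum]
  refine sum_congr rfl fun σ _ => sum_congr rfl fun τ _ => ?_
  rw [mul_mul_mul_comm, ← prod_mul_distrib]

theorem sum_sign_mul_prod_perm_apply (A : Matrix ι ι R) (τ : Perm ι) :
    ∑ σ : Perm ι, ((sign σ : ℤ) * (sign τ : ℤ) : R) * ∏ j, A (σ j) (τ j) = A.det := by
  have hτ : ((sign τ : ℤ) : R) * (sign τ : ℤ) = 1 := by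
    rw [← Int.cast_mul, ← Units.val_mul, Int.units_mul_self, Units.val_one, Int.cast_one]
  have hperm := det_permute' τ A
  rw [det_apply'] at hperm
  simp only [submatrix_apply, id] at hperm
  simp_rw [mul_right_comm _ ((sign τ : ℤ) : R), ← sum_mul, hperm]
  rw [mul_right_comm, hτ, one_mul]

theorem sum_sum_sign_mul_prod_perm_apply (A : Matrix ι ι R) :
    ∑ σ : Perm ι, ∑ τ : Perm ι, ((sign σ : ℤ) * (sign τ : ℤ) : R) * ∏ j, A (σ j) (τ j) =
      (Fintype.card ι).factorial * A.det := by
  rw [sum_comm]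
  simp_rw [sum_sign_mul_prod_perm_apply]
  rw [sum_const, card_univ, Fintype.card_perm, nsmul_eq_mul]

end Matrix

open Matrix in
theorem integral_pi_det_mul_det {𝕜 E ι : Type*} [RCLike 𝕜] [Fintype ι] [DecidableEq ι]
    [MeasurableSpace E] (μ : Measure E) [SigmaFinite μ] (f g : ι → E → 𝕜)
    (h : ∀ i j, Integrable (fun x => f i x * g j x) μ) :
    ∫ x : ι → E, det (of fun i j => f i (x j)) * det (of fun i j => g i (x j))
        ∂(Measure.pi fun _ => μ) =
      (Fintype.card ι).factorial * det (of fun i j => ∫ x, f i x * g j x ∂μ) := by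
  have hterm : ∀ σ τ : Perm ι, Integrable (fun x : ι → E =>
      ((sign σ : ℤ) * (sign τ : ℤ) : 𝕜) * ∏ j, f (σ j) (x j) * g (τ j) (x j))
      (Measure.pi fun _ => μ) :=
    fun σ τ => (Integrable.fintype_prod fun j => h (σ j) (τ j)).const_mul _
  simp_rw [det_mul_det_eq_sum_sum_perm, of_apply]
  rw [← sum_sum_sign_mul_prod_perm_apply,
    integral_finsetSum _ fun σ _ => integrable_finsetSum _ fun τ _ => hterm σ τ]
  refine sum_congr rfl fun σ _ => ?_
  rw [integral_finsetSum _ fun τ _ => hterm σ τ]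
  refine sum_congr rfl fun τ _ => ?_
  rw [integral_const_mul, integral_fintype_prod_eq_prod (fun j x => f (σ j) x * g (τ j) x)]
  rfl

theorem andreief_identity {E : Type*} [MeasurableSpace E] (μ : Measure E)
    [SigmaFinite μ] (n : ℕ) (f g : Fin n → E → ℝ)
    (h : ∀ i j, Integrable (fun x => f i x * g j x) μ) :
    ((n.factorial : ℝ))⁻¹ *
      ∫ x : Fin n → E,
        Matrix.det (Matrix.of fun i j => f i (x j)) *
          Matrix.det (Matrix.of fun i j => g i (x j)) ∂(Measure.pi fun _ => μ) =
    Matrix.det (Matrix.of fun i j => ∫ x, f i x * g j x ∂μ) := by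
  rw [integral_pi_det_mul_det μ f g h, Fintype.card_fin,
    inv_mul_cancel_left₀ (Nat.cast_ne_zero.mpr n.factorial_ne_zero)]
end

section
/- Let τ_n(t) = det(μ_{ij}(t))_{0≤i,j≤n-1} be the determinant of the time-deformed moment matrix, where μ_{ij}(t) = ⟨x^i | y^j e^{∑_k t_k y^k}⟩, and assume τ_n(t) ≠ 0. Then z^n τ_n(t - [z^{-1}]) / τ_n(t) is a monic polynomial of degree n in z, equal to the n-th monic orthogonal polynomial p_n(t; z) characterized by ⟨x^i | p_n(t;y) e^{∑_k t_k y^k}⟩ = 0 for 0 ≤ i ≤ n-1. -/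
/-!
Expanding the determinant of the moment matrix bordered by the row `(1, z, …, z^n)` along that
row gives a polynomial of degree `n` whose leading coefficient is `τ_n`; replacing the last row by
a row of moments `(μ i j)_j` with `i < n` repeats a row, which is the orthogonality. Subtracting
`z⁻¹` times column `j + 1` from column `j`, for every `j < n`, kills the last row except for `z^n`
in the corner and turns the top-left block into the shifted matrix `μ i j - z⁻¹ μ i (j + 1)`.
-/

open Matrix Polynomial Finset

section Determinants

variable {R : Type*} [CommRing R] {n : ℕ}

theorem Matrix.det_succ_row_last (A : Matrix (Fin (n + 1)) (Fin (n + 1)) R) :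
    A.det = ∑ j : Fin (n + 1),
      (-1) ^ (n + (j : ℕ)) * A (Fin.last n) j * (A.submatrix Fin.castSucc j.succAbove).det := by
  simp_rw [det_succ_row A (Fin.last n), Fin.val_last, Fin.succAbove_last]

theorem Matrix.det_eq_mul_det_submatrix_castSucc_of_last_row
    (A : Matrix (Fin (n + 1)) (Fin (n + 1)) R) (h : ∀ j : Fin n, A (Fin.last n) j.castSucc = 0) :
    A.det = A (Fin.last n) (Fin.last n) * (A.submatrix Fin.castSucc Fin.castSucc).det := by
  rw [det_succ_row_last, Fin.sum_univ_castSucc, Finset.sum_eq_zero fun j _ => by rw [h j]; ring,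
    zero_add, Fin.val_last, ← two_mul, pow_mul, neg_one_sq, one_pow, one_mul, Fin.succAbove_last]

def colDiffMatrix (n : ℕ) (w : R) : Matrix (Fin (n + 1)) (Fin (n + 1)) R :=
  of fun k j => if k = j then 1 else if (k : ℕ) = j + 1 then -w else 0

theorem det_colDiffMatrix (w : R) : (colDiffMatrix n w).det = 1 := by
  rw [det_of_isLowerTriangular]
  · exact Finset.prod_eq_one fun i _ => by simp [colDiffMatrix]
  · intro k j hkj
    have hlt : (k : ℕ) < j := hkj
    simp [colDiffMatrix, Fin.ext_iff, hlt.ne, show (k : ℕ) ≠ j + 1 by omega]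

theorem mul_colDiffMatrix_apply_castSucc (A : Matrix (Fin (n + 1)) (Fin (n + 1)) R) (w : R)
    (i : Fin (n + 1)) (j : Fin n) :
    (A * colDiffMatrix n w) i j.castSucc = A i j.castSucc - w * A i j.succ := by
  have hcol : ∀ k, colDiffMatrix n w k j.castSucc =
      (if k = j.castSucc then 1 else 0) + (if k = j.succ then -w else 0) := by
    intro k
    by_cases hk : k = j.castSucc
    · subst hk
      simp [colDiffMatrix, Fin.ext_iff]
    · rw [Fin.ext_iff, Fin.val_castSucc] at hk
      simp [colDiffMatrix, hk, Fin.ext_iff]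
  simp only [mul_apply, hcol, mul_add, Finset.sum_add_distrib, mul_ite, mul_one, mul_zero,
    Finset.sum_ite_eq', Finset.mem_univ, if_true]
  ring

theorem mul_colDiffMatrix_apply_last (A : Matrix (Fin (n + 1)) (Fin (n + 1)) R) (w : R)
    (i : Fin (n + 1)) :
    (A * colDiffMatrix n w) i (Fin.last n) = A i (Fin.last n) := by
  have hcol : ∀ k, colDiffMatrix n w k (Fin.last n) = if k = Fin.last n then 1 else 0 := by
    intro k
    have := k.is_lt
    simp [colDiffMatrix, Fin.ext_iff, show (k : ℕ) ≠ n + 1 by omega]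
  simp [mul_apply, hcol]

end Determinants

section Moments

variable {R : Type*} [CommRing R] (n : ℕ) (μ : ℕ → ℕ → R)

def borderedMomentMatrix (r : Fin (n + 1) → R) : Matrix (Fin (n + 1)) (Fin (n + 1)) R :=
  of (Fin.snoc (fun i j => μ i j) r)

def momentCofactor (j : Fin (n + 1)) : R :=
  (-1) ^ (n + (j : ℕ)) * (of fun i k : Fin n => μ i (j.succAbove k)).det

variable {n μ}

theorem det_borderedMomentMatrix (r : Fin (n + 1) → R) :
    (borderedMomentMatrix n μ r).det = ∑ j, r j * momentCofactor n μ j := by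
  rw [det_succ_row_last]
  refine Finset.sum_congr rfl fun j _ => ?_
  simp only [borderedMomentMatrix, momentCofactor, submatrix, of_apply, Fin.snoc_last,
    Fin.snoc_castSucc]
  ring

theorem momentCofactor_last :
    momentCofactor n μ (Fin.last n) = (of fun i j : Fin n => μ i j).det := by
  simp [momentCofactor]

theorem sum_moment_mul_momentCofactor_eq_zero {i : ℕ} (hi : i < n) :
    ∑ j : Fin (n + 1), μ i j * momentCofactor n μ j = 0 := by
  rw [← det_borderedMomentMatrix]
  refine det_zero_of_row_eq (i := Fin.castSucc ⟨i, hi⟩) (Fin.castSucc_ne_last _) ?_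
  ext j
  simp only [borderedMomentMatrix, of_apply, Fin.snoc_castSucc, Fin.snoc_last]

end Moments

section Field

variable {K : Type*} [Field K] {n : ℕ} {μ : ℕ → ℕ → K}

theorem det_borderedMomentMatrix_pow {z : K} (hz : z ≠ 0) :
    (borderedMomentMatrix n μ fun j => z ^ (j : ℕ)).det =
      z ^ n * (of fun i j : Fin n => μ i j - z⁻¹ * μ i (j + 1)).det := by
  set B := borderedMomentMatrix n μ fun j => z ^ (j : ℕ)
  have hlast : ∀ j : Fin n, (B * colDiffMatrix n z⁻¹) (Fin.last n) j.castSucc = 0 := by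
    intro j
    simp only [B, mul_colDiffMatrix_apply_castSucc, borderedMomentMatrix, of_apply,
      Fin.snoc_last, Fin.val_castSucc, Fin.val_succ]
    field_simp
    ring
  rw [← mul_one B.det, ← det_colDiffMatrix (n := n) z⁻¹, ← det_mul,
    det_eq_mul_det_submatrix_castSucc_of_last_row _ hlast, mul_colDiffMatrix_apply_last]
  congr 2
  · simp [B, borderedMomentMatrix]
  · ext i j
    simp [mul_colDiffMatrix_apply_castSucc, B, borderedMomentMatrix]

variable [DecidableEq K] (n μ) in
/-- `det (borderedMomentMatrix n μ (X ^ ·)) / τ_n`, given by its coefficients. -/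
noncomputable def monicOrthogonalPolynomial : K[X] :=
  ofFn (n + 1) fun j => momentCofactor n μ j / (of fun i j : Fin n => μ i j).det

theorem coeff_monicOrthogonalPolynomial [DecidableEq K] (j : Fin (n + 1)) :
    (monicOrthogonalPolynomial n μ).coeff j =
      momentCofactor n μ j / (of fun i j : Fin n => μ i j).det := by
  rw [monicOrthogonalPolynomial, ofFn_coeff_eq_val_of_lt _ j.is_lt]

theorem isMonicOfDegree_monicOrthogonalPolynomial [DecidableEq K]
    (hτ : (of fun i j : Fin n => μ i j).det ≠ 0) :
    IsMonicOfDegree (monicOrthogonalPolynomial n μ) n := by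
  rw [isMonicOfDegree_iff]
  refine ⟨Nat.lt_succ_iff.mp (ofFn_natDegree_lt n.succ_pos _), ?_⟩
  simpa [momentCofactor_last, hτ] using coeff_monicOrthogonalPolynomial (μ := μ) (Fin.last n)

theorem sum_coeff_monicOrthogonalPolynomial_mul_moment_eq_zero [DecidableEq K] {i : ℕ}
    (hi : i < n) : ∑ j ∈ range (n + 1), (monicOrthogonalPolynomial n μ).coeff j * μ i j = 0 := by
  simp_rw [Finset.sum_range, coeff_monicOrthogonalPolynomial, div_mul_eq_mul_div, ← Finset.sum_div,
    mul_comm (momentCofactor n μ _), sum_moment_mul_momentCofactor_eq_zero hi, zero_div]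

theorem eval_monicOrthogonalPolynomial [DecidableEq K] (z : K) :
    (monicOrthogonalPolynomial n μ).eval z =
      (borderedMomentMatrix n μ fun j => z ^ (j : ℕ)).det / (of fun i j : Fin n => μ i j).det := by
  rw [monicOrthogonalPolynomial, ofFn_eq_sum_monomial, det_borderedMomentMatrix, eval_finsetSum,
    Finset.sum_div]
  refine Finset.sum_congr rfl fun j _ => ?_
  rw [eval_monomial]
  ring

end Field

theorem tau_shift_is_monic_orthogonal_polynomial (n : ℕ) (μ : ℕ → ℕ → ℝ)
    (hτ : Matrix.det (Matrix.of fun i j : Fin n => μ (i : ℕ) (j : ℕ)) ≠ 0) :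
    ∃ p : Polynomial ℝ, p.Monic ∧ p.natDegree = n ∧
      (∀ i < n, ∑ j ∈ Finset.range (n + 1), p.coeff j * μ i j = 0) ∧
      ∀ z : ℝ, z ≠ 0 →
        z ^ n *
            Matrix.det (Matrix.of fun i j : Fin n =>
              μ (i : ℕ) (j : ℕ) - z⁻¹ * μ (i : ℕ) ((j : ℕ) + 1)) /
          Matrix.det (Matrix.of fun i j : Fin n => μ (i : ℕ) (j : ℕ)) =
        p.eval z := by
  have hp := isMonicOfDegree_monicOrthogonalPolynomial hτ
  refine ⟨monicOrthogonalPolynomial n μ, hp.monic, hp.natDegree_eq,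
    fun i hi => sum_coeff_monicOrthogonalPolynomial_mul_moment_eq_zero hi, fun z hz => ?_⟩
  rw [eval_monicOrthogonalPolynomial, det_borderedMomentMatrix_pow hz]
end

section
/- For columns C_0, C_1, ..., C_n in a vector space of dimension n, the following expansion holds: det(zC_0 - C_1, zC_1 - C_2, ..., zC_{n-1} - C_n) = ∑_{j=0}^{n} z^j det(C_0, ..., C_{j-1}, -C_{j+1}, ..., -C_n), where in the j-th summand the columns C_0,...,C_{j-1} appear with positive sign and C_{j+1},...,C_n with negative sign (and C_j is omitted). -/
lemma card_pref_aux (n j : ℕ) (hj : j ≤ n) :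
    (Finset.univ.filter fun k : Fin n => (k : ℕ) < j).card = j := by
  rw [← Finset.card_range j]
  apply Finset.card_bij (fun (k : Fin n) _ => (k : ℕ))
  · intro a ha
    simp only [Finset.mem_filter] at ha
    simpa using ha.2
  · intro a _ b _ h
    exact Fin.val_injective h
  · intro a ha
    simp only [Finset.mem_range] at ha
    exact ⟨⟨a, lt_of_lt_of_le ha hj⟩, by simp [ha], rfl⟩

/-- A finset of `Fin n` closed under predecessors is a prefix. -/
lemma pref_char (n : ℕ) (s : Finset (Fin n))
    (hs : ∀ a b : Fin n, (a : ℕ) + 1 = (b : ℕ) → b ∈ s → a ∈ s) :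
    s = Finset.univ.filter fun k : Fin n => (k : ℕ) < s.card := by
  -- downward closed
  have down : ∀ d : ℕ, ∀ b : Fin n, b ∈ s → ∀ a : Fin n, (a : ℕ) + d = (b : ℕ) → a ∈ s := by
    intro d
    induction d with
    | zero => intro b hb a ha; have : a = b := Fin.ext (by omega); exact this ▸ hb
    | succ d ih =>
      intro b hb a ha
      have hlt : (a : ℕ) + d < n := by have := b.isLt; omega
      have h1 : (⟨(a : ℕ) + d, hlt⟩ : Fin n) ∈ s := hs _ b (by simp; omega) hb
      exact ih _ h1 a (by simp)
  ext k
  simp only [Finset.mem_filter, Finset.mem_univ, true_and]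
  constructor
  · intro hk
    by_contra hlt
    push_neg at hlt
    -- all elements ≤ k are in s, so card ≥ k+1
    have hsub : (Finset.univ.filter fun x : Fin n => (x : ℕ) < (k : ℕ) + 1) ⊆ s := by
      intro x hx
      simp only [Finset.mem_filter, Finset.mem_univ, true_and] at hx
      exact down ((k : ℕ) - (x : ℕ)) k hk x (by omega)
    have := Finset.card_le_card hsub
    rw [card_pref_aux n ((k : ℕ) + 1) k.isLt] at this
    omega
  · intro hk
    by_contra hks
    -- then s ⊆ {x | x < k}, so card ≤ k
    have hsub : s ⊆ Finset.univ.filter fun x : Fin n => (x : ℕ) < (k : ℕ) := by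
      intro x hx
      simp only [Finset.mem_filter, Finset.mem_univ, true_and]
      by_contra hxk
      push_neg at hxk
      exact hks (down ((x : ℕ) - (k : ℕ)) x hx k (by omega))
    have := Finset.card_le_card hsub
    rw [card_pref_aux n (k : ℕ) (le_of_lt k.isLt)] at this
    omega

theorem det_shifted_columns_expansion {R : Type*} [CommRing R] (n : ℕ) (z : R)
    (C : Fin (n + 1) → Fin n → R) :
    Matrix.det (Matrix.of fun i k : Fin n => z * C k.castSucc i - C k.succ i) =
      ∑ j : Fin (n + 1), z ^ (j : ℕ) *
        Matrix.det (Matrix.of fun i k : Fin n =>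
          if (k : ℕ) < (j : ℕ) then C k.castSucc i else -C k.succ i) := by
  classical
  set g := (Matrix.detRowAlternating : (Fin n → R) [⋀^Fin n]→ₗ[R] R).toMultilinearMap with hg
  have hdet : ∀ v : Fin n → Fin n → R,
      Matrix.det (Matrix.of fun i k => v k i) = g v := by
    intro v
    rw [← Matrix.det_transpose]
    rfl
  set m0 : Finset (Fin n) → Fin n → (Fin n → R) :=
    fun s k => if k ∈ s then C k.castSucc else -C k.succ with hm0
  -- step 1: LHS = g (u + v)
  have step1 : Matrix.det (Matrix.of fun i k : Fin n => z * C k.castSucc i - C k.succ i) =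
      g ((fun k => z • C k.castSucc) + fun k => -C k.succ) := by
    rw [hdet]
    congr 1
    funext k i
    simp [sub_eq_add_neg]
  -- step 2: expand multilinearly
  have step2 : g ((fun k => z • C k.castSucc) + fun k => -C k.succ) =
      ∑ s : Finset (Fin n), z ^ s.card • g (m0 s) := by
    rw [g.map_add_univ]
    refine Finset.sum_congr rfl fun s _ => ?_
    have hpc : s.piecewise (fun k => z • C k.castSucc) (fun k => -C k.succ) =
        s.piecewise (fun k => z • m0 s k) (m0 s) := by
      funext k
      by_cases hk : k ∈ s
      · simp [Finset.piecewise, hk, hm0]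
      · simp [Finset.piecewise, hk, hm0]
    rw [hpc]
    have h2 := g.map_piecewise_smul (fun _ => z) (m0 s) s
    simpa using h2
  -- step 3: non-prefix sets vanish
  have step3 : ∀ s : Finset (Fin n),
      (¬ ∀ a b : Fin n, (a : ℕ) + 1 = (b : ℕ) → b ∈ s → a ∈ s) → g (m0 s) = 0 := by
    intro s hs
    push_neg at hs
    obtain ⟨a, b, hab, hbs, has⟩ := hs
    have hne : a ≠ b := by
      intro h
      subst h
      omega
    have hCab : C a.succ = C b.castSucc := by
      have hab' : a.succ = b.castSucc := Fin.ext (by simp only [Fin.val_succ, Fin.coe_castSucc]; omega)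
      rw [hab']
    have hma : m0 s a = (-1 : R) • C a.succ := by
      show (if a ∈ s then C a.castSucc else -C a.succ) = (-1 : R) • C a.succ
      rw [if_neg has, neg_one_smul]
    have h1 : g (m0 s) = g (Function.update (m0 s) a ((-1 : R) • C a.succ)) := by
      rw [← hma, Function.update_eq_self]
    rw [h1, g.map_update_smul]
    have heq : Function.update (m0 s) a (C a.succ) b = Function.update (m0 s) a (C a.succ) a := by
      rw [Function.update_self, Function.update_of_ne (Ne.symm hne)]
      show (if b ∈ s then C b.castSucc else -C b.succ) = C a.succ
      rw [if_pos hbs]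
      exact hCab.symm
    have hz : g (Function.update (m0 s) a (C a.succ)) = 0 :=
      (Matrix.detRowAlternating : (Fin n → R) [⋀^Fin n]→ₗ[R] R).map_eq_zero_of_eq
        _ heq (Ne.symm hne)
    rw [hz, smul_zero]
  -- final reindexing
  set P : Finset (Fin n) → Prop :=
    fun s => ∀ a b : Fin n, (a : ℕ) + 1 = (b : ℕ) → b ∈ s → a ∈ s with hP
  set pref : Fin (n + 1) → Finset (Fin n) :=
    fun j => Finset.univ.filter fun k : Fin n => (k : ℕ) < (j : ℕ) with hpref
  have hcard : ∀ j : Fin (n + 1), (pref j).card = (j : ℕ) := fun j =>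
    card_pref_aux n (j : ℕ) (by omega)
  have hPpref : ∀ j, P (pref j) := by
    intro j a b hab hb
    simp only [hpref, Finset.mem_filter, Finset.mem_univ, true_and] at hb ⊢
    omega
  have hprefcard : ∀ s : Finset (Fin n), P s → pref ⟨s.card, by
      have := Finset.card_le_univ s
      simp only [Finset.card_univ, Fintype.card_fin] at this
      omega⟩ = s := by
    intro s hs
    exact (pref_char n s hs).symm
  rw [step1, step2]
  rw [← Finset.sum_filter_of_ne (p := P) (fun s _ hne => by
    by_contra h
    rw [step3 s h, smul_zero] at hne
    exact hne rfl)]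
  refine Finset.sum_bij'
    (fun s _ => (⟨s.card, by
      have := Finset.card_le_univ s
      simp only [Finset.card_univ, Fintype.card_fin] at this
      omega⟩ : Fin (n + 1)))
    (fun j _ => pref j) (fun s _ => Finset.mem_univ _)
    (fun j _ => Finset.mem_filter.mpr ⟨Finset.mem_univ _, hPpref j⟩)
    ?_ ?_ ?_
  · intro s hs
    exact hprefcard s (Finset.mem_filter.mp hs).2
  · intro j _
    exact Fin.ext (hcard j)
  · intro s hs
    have hps : pref (⟨s.card, by
        have := Finset.card_le_univ s
        simp only [Finset.card_univ, Fintype.card_fin] at this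
        omega⟩ : Fin (n + 1)) = s := hprefcard s (Finset.mem_filter.mp hs).2
    have hm : m0 s = fun (k i : Fin n) =>
        if (k : ℕ) < s.card then C k.castSucc i else -C k.succ i := by
      funext k i
      conv_lhs => rw [← hps]
      simp only [hm0, hpref, Finset.mem_filter, Finset.mem_univ, true_and, Fin.val_mk]
      by_cases hk : (k : ℕ) < s.card
      · rw [if_pos hk, if_pos hk]
      · rw [if_neg hk, if_neg hk, Pi.neg_apply]
    simp only [Fin.val_mk]
    rw [hdet (fun (k i : Fin n) =>
      if (k : ℕ) < s.card then C k.castSucc i else -C k.succ i)]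
    rw [smul_eq_mul, hm]
end
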